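/- Let B₁, B₂ be matrices with the structure B_i = diag(1/√q_i)·W_i·diag(√p), each with top singular value 1 and common top right singular vector v₀ = √p. Then sup over unit vectors L ∈ (ℝ^n)^{⊗2} orthogonal to v₀⊗v₀ of min{‖B₁^{⊗2}L‖², ‖B₂^{⊗2}L‖²} equals sup over unit vectors ℓ ∈ ℝ^n orthogonal to v₀ of min{‖B₁ℓ‖², ‖B₂ℓ‖²}; i.e., the 2-letter linear information coupling value for 2 receivers equals the single-letter value. -/

import Mathlib

/-!
Write a two-letter direction as `L = v ⊗ l + M` with `l = (vᵀ ⊗ 1) L`, so that every column of `M`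
is orthogonal to `v`, and `l ⊥ v` because `L ⊥ v ⊗ v`. As `B v = u` and `Bᵀ u = v`, the two pieces
stay orthogonal under `B ⊗ B`, and since `‖B‖ ≤ 1` acting on the second factor,
`‖(B ⊗ B) L‖² = ‖B l‖² + ‖(B ⊗ B) M‖² ≤ ‖B l‖² + ∑ᵢ ‖B Mᵢ‖²` over the columns `Mᵢ` of `M`.
So for both receivers the two-letter gain is dominated by the sum of single-letter gains of one
family `l, M₁, M₂, …` of vectors orthogonal to `v` whose squared norms add up to `1`.
Such a family can be merged into a single unit vector that dominates both sums: rotate two of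
its vectors in their plane until both quadratic forms split them in the same proportion
(intermediate value theorem); one of the rotated vectors, rescaled, then beats the pair in both
forms. Conversely `l ↦ v ⊗ l` embeds the single-letter problem into the two-letter one.
-/

open Finset Matrix Real
open scoped Kronecker

theorem mul_le_of_balanced {A₁ A₂ N n q₁ q₂ : ℝ} (hA₁ : 0 ≤ A₁) (hA₂ : 0 ≤ A₂) (hN : 0 ≤ N)
    (hq₁ : 0 ≤ q₁) (hbal : q₁ * A₂ = q₂ * A₁) (hle : n * (A₁ + A₂) ≤ N * (q₁ + q₂)) :
    A₁ * n ≤ N * q₁ := by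
  rcases (add_nonneg hA₁ hA₂).eq_or_lt' with h | h
  · rw [show A₁ = 0 by linarith, zero_mul]
    positivity
  · have : (A₁ * n - N * q₁) * (A₁ + A₂) ≤ 0 := by
      nlinarith [mul_le_mul_of_nonneg_left hle hA₁]
    linarith [nonpos_of_mul_nonpos_left this h]

namespace QuadraticMap

variable {V : Type*} [AddCommGroup V] [Module ℝ V]

theorem map_smul_add_smul (Q : QuadraticForm ℝ V) (a b : ℝ) (u v : V) :
    Q (a • u + b • v) = a ^ 2 * Q u + b ^ 2 * Q v + a * b * polar Q u v := by
  rw [QuadraticMap.map_add Q, QuadraticMap.map_smul, QuadraticMap.map_smul, polar_smul_left,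
    polar_smul_right]
  simp only [smul_eq_mul]
  ring

theorem map_rotate_add_map_rotate (Q : QuadraticForm ℝ V) (θ : ℝ) (u v : V) :
    Q (cos θ • u + sin θ • v) + Q (-sin θ • u + cos θ • v) = Q u + Q v := by
  rw [map_smul_add_smul, map_smul_add_smul]
  linear_combination (Q u + Q v) * sin_sq_add_cos_sq θ

theorem continuous_map_rotate (Q : QuadraticForm ℝ V) (u v : V) :
    Continuous fun θ => Q (cos θ • u + sin θ • v) := by
  simp only [map_smul_add_smul]
  fun_prop

theorem exists_rotate_balanced (Q₁ Q₂ : QuadraticForm ℝ V) (u v : V) :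
    ∃ θ : ℝ, Q₁ (cos θ • u + sin θ • v) * (Q₂ u + Q₂ v) =
      Q₂ (cos θ • u + sin θ • v) * (Q₁ u + Q₁ v) := by
  let F := fun θ => Q₁ (cos θ • u + sin θ • v) * (Q₂ u + Q₂ v) -
      Q₂ (cos θ • u + sin θ • v) * (Q₁ u + Q₁ v)
  have hF : Continuous F :=
    ((continuous_map_rotate Q₁ u v).mul continuous_const).sub
      ((continuous_map_rotate Q₂ u v).mul continuous_const)
  have hsum : F 0 + F (π / 2) = 0 := by
    simp only [F, cos_zero, sin_zero, cos_pi_div_two, sin_pi_div_two, one_smul, zero_smul,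
      add_zero, zero_add]
    ring
  obtain ⟨θ, hθ⟩ : (0 : ℝ) ∈ Set.range F := by
    rcases le_total (F 0) 0 with h | h
    · exact mem_range_of_exists_le_of_exists_ge hF ⟨0, h⟩ ⟨π / 2, by linarith⟩
    · exact mem_range_of_exists_le_of_exists_ge hF ⟨π / 2, by linarith⟩ ⟨0, h⟩
  exact ⟨θ, sub_eq_zero.1 hθ⟩

theorem exists_smul_eq_of_mul_le {Q₀ Q₁ Q₂ : QuadraticForm ℝ V} {w : V} {N A₁ A₂ : ℝ}
    (hw : 0 < Q₀ w) (hN : 0 ≤ N) (h₁ : A₁ * Q₀ w ≤ N * Q₁ w) (h₂ : A₂ * Q₀ w ≤ N * Q₂ w) :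
    ∃ c : ℝ, Q₀ (c • w) = N ∧ A₁ ≤ Q₁ (c • w) ∧ A₂ ≤ Q₂ (c • w) := by
  have hc : √(N / Q₀ w) * √(N / Q₀ w) = N / Q₀ w := mul_self_sqrt (div_nonneg hN hw.le)
  refine ⟨√(N / Q₀ w), ?_, ?_, ?_⟩ <;> simp only [QuadraticMap.map_smul, hc, smul_eq_mul]
  · field_simp
  · rw [div_mul_eq_mul_div, le_div_iff₀ hw]; exact h₁
  · rw [div_mul_eq_mul_div, le_div_iff₀ hw]; exact h₂

theorem exists_merge_pair {Q₀ Q₁ Q₂ : QuadraticForm ℝ V} (h₀ : Q₀.PosDef)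
    (h₁ : ∀ x, 0 ≤ Q₁ x) (h₂ : ∀ x, 0 ≤ Q₂ x) {S : Submodule ℝ V} {u v : V}
    (hu : u ∈ S) (hv : v ∈ S) :
    ∃ w ∈ S, Q₀ w = Q₀ u + Q₀ v ∧ Q₁ u + Q₁ v ≤ Q₁ w ∧ Q₂ u + Q₂ v ≤ Q₂ w := by
  set N := Q₀ u + Q₀ v
  set A₁ := Q₁ u + Q₁ v
  set A₂ := Q₂ u + Q₂ v
  have hN : 0 ≤ N := add_nonneg (h₀.nonneg u) (h₀.nonneg v)
  have hA₁ : 0 ≤ A₁ := add_nonneg (h₁ u) (h₁ v)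
  have hA₂ : 0 ≤ A₂ := add_nonneg (h₂ u) (h₂ v)
  -- A balanced vector that carries at least its share of `N` can be rescaled to do the job.
  have of_balanced : ∀ w ∈ S, Q₁ w * A₂ = Q₂ w * A₁ → 0 < Q₀ w →
      Q₀ w * (A₁ + A₂) ≤ N * (Q₁ w + Q₂ w) →
      ∃ w' ∈ S, Q₀ w' = N ∧ A₁ ≤ Q₁ w' ∧ A₂ ≤ Q₂ w' := by
    intro w hw hbal hpos hle
    obtain ⟨c, hc⟩ := exists_smul_eq_of_mul_le (Q₁ := Q₁) (Q₂ := Q₂) hpos hN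
      (mul_le_of_balanced hA₁ hA₂ hN (h₁ w) hbal hle)
      (mul_le_of_balanced hA₂ hA₁ hN (h₂ w) hbal.symm (by linarith))
    exact ⟨c • w, S.smul_mem c hw, hc⟩
  obtain ⟨θ, hθ⟩ := exists_rotate_balanced Q₁ Q₂ u v
  have e₀ := map_rotate_add_map_rotate Q₀ θ u v
  have e₁ := map_rotate_add_map_rotate Q₁ θ u v
  have e₂ := map_rotate_add_map_rotate Q₂ θ u v
  set w₁ := cos θ • u + sin θ • v
  set w₂ := -sin θ • u + cos θ • v
  have hw₁ : w₁ ∈ S := S.add_mem (S.smul_mem _ hu) (S.smul_mem _ hv)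
  have hw₂ : w₂ ∈ S := S.add_mem (S.smul_mem _ hu) (S.smul_mem _ hv)
  rcases eq_or_ne w₁ 0 with h0 | h0
  · simp only [h0, map_zero, zero_add] at e₀ e₁ e₂
    exact ⟨w₂, hw₂, e₀, e₁.ge, e₂.ge⟩
  rcases eq_or_ne w₂ 0 with h0' | h0'
  · simp only [h0', map_zero, add_zero] at e₀ e₁ e₂
    exact ⟨w₁, hw₁, e₀, e₁.ge, e₂.ge⟩
  rcases le_total (Q₀ w₁ * (A₁ + A₂)) (N * (Q₁ w₁ + Q₂ w₁)) with h | h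
  · exact of_balanced w₁ hw₁ hθ (h₀ w₁ h0) h
  · refine of_balanced w₂ hw₂ ?_ (h₀ w₂ h0') ?_
    · linear_combination -hθ + A₂ * e₁ - A₁ * e₂
    · linear_combination h + (A₁ + A₂) * e₀ - N * (e₁ + e₂)

theorem exists_merge_finset_sum {ι : Type*} {Q₀ Q₁ Q₂ : QuadraticForm ℝ V} (h₀ : Q₀.PosDef)
    (h₁ : ∀ x, 0 ≤ Q₁ x) (h₂ : ∀ x, 0 ≤ Q₂ x) {S : Submodule ℝ V} (s : Finset ι) {u : ι → V}
    (hu : ∀ i ∈ s, u i ∈ S) :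
    ∃ w ∈ S, Q₀ w = ∑ i ∈ s, Q₀ (u i) ∧ ∑ i ∈ s, Q₁ (u i) ≤ Q₁ w ∧
      ∑ i ∈ s, Q₂ (u i) ≤ Q₂ w := by
  induction s using Finset.cons_induction with
  | empty => exact ⟨0, S.zero_mem, by simp, by simp, by simp⟩
  | cons i s hi ih =>
    obtain ⟨w, hw, hw₀, hw₁, hw₂⟩ := ih fun j hj => hu j (Finset.mem_cons_of_mem hj)
    obtain ⟨w', hw', h₀', h₁', h₂'⟩ :=
      exists_merge_pair h₀ h₁ h₂ (hu i (Finset.mem_cons_self i s)) hw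
    refine ⟨w', hw', ?_, ?_, ?_⟩ <;> rw [Finset.sum_cons] <;> linarith

end QuadraticMap

section

variable {ι X X' Y Y' : Type*}

namespace Matrix

variable [Fintype X] [Fintype Y]

noncomputable def sqNormForm (B : Matrix Y X ℝ) : QuadraticForm ℝ (X → ℝ) :=
  (QuadraticMap.weightedSumSquares ℝ (1 : Y → ℝ)).comp B.mulVecLin

@[simp]
theorem sqNormForm_apply (B : Matrix Y X ℝ) (g : X → ℝ) :
    B.sqNormForm g = ∑ y, (B *ᵥ g) y ^ 2 := by
  simp [sqNormForm, sq]

theorem sqNormForm_nonneg (B : Matrix Y X ℝ) (g : X → ℝ) : 0 ≤ B.sqNormForm g := by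
  rw [sqNormForm_apply]
  positivity

theorem posDef_sqNormForm_one [DecidableEq X] : (1 : Matrix X X ℝ).sqNormForm.PosDef := by
  refine QuadraticMap.posDef_of_nonneg (sqNormForm_nonneg 1) fun g hg => ?_
  rw [← dotProduct_self_eq_zero]
  simpa [dotProduct, sq] using hg

end Matrix

def tensorVec {α β : Type*} (f : α → ℝ) (g : β → ℝ) : α × β → ℝ := fun s => f s.1 * g s.2

theorem tensorVec_vecMul_kronecker [Fintype Y] [Fintype Y'] (f : Y → ℝ) (g : Y' → ℝ)
    (A : Matrix Y X ℝ) (B : Matrix Y' X' ℝ) :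
    tensorVec f g ᵥ* (A ⊗ₖ B) = tensorVec (f ᵥ* A) (g ᵥ* B) := by
  ext ⟨x, x'⟩
  simp only [tensorVec, vecMul, dotProduct, kroneckerMap_apply, Fintype.sum_prod_type,
    Finset.sum_mul_sum]
  congr! 2 with y _ y' _
  ring

theorem sum_sq_add_of_dotProduct_eq_zero [Fintype ι] {f g : ι → ℝ} (h : f ⬝ᵥ g = 0) :
    ∑ i, (f + g) i ^ 2 = ∑ i, f i ^ 2 + ∑ i, g i ^ 2 := by
  simp only [Pi.add_apply, add_sq, Finset.sum_add_distrib, mul_assoc, ← Finset.mul_sum]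
  simp only [dotProduct] at h
  rw [h]
  ring

section

variable [Fintype X] [Fintype X']

theorem sum_sq_tensorVec (f : X → ℝ) (g : X' → ℝ) :
    ∑ s, tensorVec f g s ^ 2 = (∑ x, f x ^ 2) * ∑ x', g x' ^ 2 := by
  simp only [tensorVec, mul_pow, Fintype.sum_prod_type, Finset.sum_mul_sum]

theorem tensorVec_dotProduct_tensorVec (f f' : X → ℝ) (g g' : X' → ℝ) :
    tensorVec f g ⬝ᵥ tensorVec f' g' = (f ⬝ᵥ f') * (g ⬝ᵥ g') := by
  simp only [tensorVec, dotProduct, Fintype.sum_prod_type, Finset.sum_mul_sum]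
  congr! 2 with x _ x' _
  ring

theorem tensorVec_dotProduct_eq_zero {f : X → ℝ} {M : X × X' → ℝ}
    (hM : ∀ x', ∑ x, f x * M (x, x') = 0) (g : X' → ℝ) : tensorVec f g ⬝ᵥ M = 0 := by
  simp only [tensorVec, dotProduct, Fintype.sum_prod_type]
  rw [Finset.sum_comm]
  refine Finset.sum_eq_zero fun x' _ => ?_
  simp only [mul_right_comm _ (g x'), ← Finset.sum_mul, hM, zero_mul]

theorem kronecker_mulVec_tensorVec (A : Matrix Y X ℝ) (B : Matrix Y' X' ℝ) (f : X → ℝ)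
    (g : X' → ℝ) : (A ⊗ₖ B) *ᵥ tensorVec f g = tensorVec (A *ᵥ f) (B *ᵥ g) := by
  ext ⟨y, y'⟩
  simp only [tensorVec, mulVec, dotProduct, kroneckerMap_apply, Fintype.sum_prod_type,
    Finset.sum_mul_sum]
  congr! 2 with x _ x' _
  ring

theorem kronecker_mulVec_apply (A : Matrix Y X ℝ) (B : Matrix Y' X' ℝ) (L : X × X' → ℝ)
    (y : Y) (y' : Y') :
    ((A ⊗ₖ B) *ᵥ L) (y, y') = (B *ᵥ fun x' => (A *ᵥ fun x => L (x, x')) y) y' := by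
  simp only [mulVec, dotProduct, kroneckerMap_apply, Fintype.sum_prod_type, Finset.mul_sum]
  rw [Finset.sum_comm]
  congr! 2 with x' _ x _
  ring

end

variable [Fintype X] [Fintype X'] [Fintype Y] [Fintype Y']

theorem sum_sq_kronecker_mulVec_le {B : Matrix Y' X' ℝ}
    (hB : ∀ g, ∑ y', (B *ᵥ g) y' ^ 2 ≤ ∑ x', g x' ^ 2) (A : Matrix Y X ℝ) (L : X × X' → ℝ) :
    ∑ t, ((A ⊗ₖ B) *ᵥ L) t ^ 2 ≤ ∑ x', ∑ y, (A *ᵥ fun x => L (x, x')) y ^ 2 := by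
  simp only [Fintype.sum_prod_type, kronecker_mulVec_apply]
  rw [Finset.sum_comm (s := univ (α := X'))]
  exact Finset.sum_le_sum fun y _ => hB _

structure IsTopSingularPair (B : Matrix Y X ℝ) (v : X → ℝ) (u : Y → ℝ) : Prop where
  mulVec_eq : B *ᵥ v = u
  vecMul_eq : u ᵥ* B = v
  sum_sq_mulVec_le : ∀ g, ∑ y, (B *ᵥ g) y ^ 2 ≤ ∑ x, g x ^ 2

namespace IsTopSingularPair

variable {B : Matrix Y X ℝ} {v : X → ℝ} {u : Y → ℝ}

theorem sum_sq_left (h : IsTopSingularPair B v u) : ∑ y, u y ^ 2 = ∑ x, v x ^ 2 := by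
  have := dotProduct_mulVec u B v
  rw [h.mulVec_eq, h.vecMul_eq] at this
  simpa [dotProduct, sq] using this

theorem sum_sq_kronecker_mulVec_tensorVec (h : IsTopSingularPair B v u)
    (hv : ∑ x, v x ^ 2 = 1) (l : X → ℝ) :
    ∑ t, ((B ⊗ₖ B) *ᵥ tensorVec v l) t ^ 2 = ∑ y, (B *ᵥ l) y ^ 2 := by
  rw [kronecker_mulVec_tensorVec, h.mulVec_eq, sum_sq_tensorVec, h.sum_sq_left, hv, one_mul]

theorem sum_sq_kronecker_mulVec_tensorVec_add_le (h : IsTopSingularPair B v u)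
    (hv : ∑ x, v x ^ 2 = 1) (l : X → ℝ) {M : X × X → ℝ} (hM : ∀ x', ∑ x, v x * M (x, x') = 0) :
    ∑ t, ((B ⊗ₖ B) *ᵥ (tensorVec v l + M)) t ^ 2 ≤
      ∑ y, (B *ᵥ l) y ^ 2 + ∑ x', ∑ y, (B *ᵥ fun x => M (x, x')) y ^ 2 := by
  have horth : ((B ⊗ₖ B) *ᵥ tensorVec v l) ⬝ᵥ ((B ⊗ₖ B) *ᵥ M) = 0 := by
    rw [kronecker_mulVec_tensorVec, h.mulVec_eq, dotProduct_mulVec, tensorVec_vecMul_kronecker,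
      h.vecMul_eq]
    exact tensorVec_dotProduct_eq_zero hM _
  rw [mulVec_add, sum_sq_add_of_dotProduct_eq_zero horth, h.sum_sq_kronecker_mulVec_tensorVec hv]
  gcongr
  exact sum_sq_kronecker_mulVec_le h.sum_sq_mulVec_le B M

end IsTopSingularPair

theorem exists_eq_tensorVec_add {v : X → ℝ} (hv : ∑ x, v x ^ 2 = 1) (L : X × X → ℝ) :
    ∃ (l : X → ℝ) (M : X × X → ℝ), L = tensorVec v l + M ∧
      (∀ x', ∑ x, v x * M (x, x') = 0) ∧ l ⬝ᵥ v = L ⬝ᵥ tensorVec v v ∧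
      ∑ s, L s ^ 2 = ∑ x, l x ^ 2 + ∑ x', ∑ x, M (x, x') ^ 2 := by
  set l : X → ℝ := fun x' => ∑ x, v x * L (x, x')
  have hM : ∀ x', ∑ x, v x * (L - tensorVec v l) (x, x') = 0 := by
    intro x'
    simp only [Pi.sub_apply, tensorVec, mul_sub, Finset.sum_sub_distrib, ← mul_assoc,
      ← Finset.sum_mul, ← sq, hv, one_mul, l, sub_self]
  refine ⟨l, L - tensorVec v l, (add_sub_cancel _ _).symm, hM, ?_, ?_⟩
  · simp only [l, dotProduct, tensorVec, Fintype.sum_prod_type, Finset.sum_mul]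
    rw [Finset.sum_comm]
    congr! 2 with x _ x' _
    ring
  · conv_lhs => rw [← add_sub_cancel (tensorVec v l) L]
    rw [sum_sq_add_of_dotProduct_eq_zero (tensorVec_dotProduct_eq_zero hM l), sum_sq_tensorVec,
      hv, one_mul, Fintype.sum_prod_type, Finset.sum_comm]

noncomputable def linearCouplingValue (B₁ : Matrix Y X ℝ) (B₂ : Matrix Y' X ℝ) (v : X → ℝ) : ℝ :=
  sSup {r | ∃ l : X → ℝ, ∑ x, l x ^ 2 = 1 ∧ l ⬝ᵥ v = 0 ∧
    r = min (∑ y, (B₁ *ᵥ l) y ^ 2) (∑ y, (B₂ *ᵥ l) y ^ 2)}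

theorem linearCouplingValue_kronecker_self {B₁ : Matrix Y X ℝ} {B₂ : Matrix Y' X ℝ}
    {v : X → ℝ} {u₁ : Y → ℝ} {u₂ : Y' → ℝ} (hv : ∑ x, v x ^ 2 = 1)
    (h₁ : IsTopSingularPair B₁ v u₁) (h₂ : IsTopSingularPair B₂ v u₂) :
    linearCouplingValue (B₁ ⊗ₖ B₁) (B₂ ⊗ₖ B₂) (tensorVec v v) = linearCouplingValue B₁ B₂ v := by
  classical
  refine csSup_eq_csSup_of_forall_exists_le ?_ ?_
  · rintro r ⟨L, hL, hLv, rfl⟩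
    obtain ⟨l, M, rfl, hM, hlv, hnorm⟩ := exists_eq_tensorVec_add hv L
    have hu : ∀ o ∈ univ, Option.elim o l (fun x' x => M (x, x')) ∈
        LinearMap.ker (dotProductBilin ℝ ℝ v) := by
      rintro (_ | x') -
      · simpa [dotProduct_comm] using hlv.trans hLv
      · simpa [dotProduct] using hM x'
    obtain ⟨z, hz, hz₀, hz₁, hz₂⟩ := QuadraticMap.exists_merge_finset_sum posDef_sqNormForm_one
      (sqNormForm_nonneg B₁) (sqNormForm_nonneg B₂) univ hu
    simp only [sqNormForm_apply, one_mulVec, Fintype.sum_option, Option.elim] at hz₀ hz₁ hz₂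
    refine ⟨_, ⟨z, by rw [hz₀, ← hnorm, hL], ?_, rfl⟩, min_le_min ?_ ?_⟩
    · simpa [dotProduct_comm] using hz
    · exact (h₁.sum_sq_kronecker_mulVec_tensorVec_add_le hv l hM).trans hz₁
    · exact (h₂.sum_sq_kronecker_mulVec_tensorVec_add_le hv l hM).trans hz₂
  · rintro r ⟨l, hl, hlv, rfl⟩
    refine ⟨_, ⟨tensorVec v l, ?_, ?_, rfl⟩, ?_⟩
    · rw [sum_sq_tensorVec, hv, hl, one_mul]
    · rw [tensorVec_dotProduct_tensorVec, hlv, mul_zero]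
    · rw [h₁.sum_sq_kronecker_mulVec_tensorVec hv, h₂.sum_sq_kronecker_mulVec_tensorVec hv]

noncomputable def divergenceTransitionMatrix (W : Matrix Y X ℝ) (p : X → ℝ) : Matrix Y X ℝ :=
  of fun y x => W y x * √(p x) / √((W *ᵥ p) y)

section DivergenceTransitionMatrix

variable {W : Matrix Y X ℝ} {p : X → ℝ}

theorem sum_sq_divergenceTransitionMatrix_mulVec_le (hW₀ : ∀ y x, 0 ≤ W y x)
    (hW₁ : ∀ x, ∑ y, W y x = 1) (hp : ∀ x, 0 ≤ p x) (g : X → ℝ) :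
    ∑ y, (divergenceTransitionMatrix W p *ᵥ g) y ^ 2 ≤ ∑ x, g x ^ 2 := by
  have hrow : ∀ y, (divergenceTransitionMatrix W p *ᵥ g) y ^ 2 ≤ ∑ x, W y x * g x ^ 2 := by
    intro y
    have hq : 0 ≤ (W *ᵥ p) y := sum_nonneg fun x _ => mul_nonneg (hW₀ y x) (hp x)
    have hB : (divergenceTransitionMatrix W p *ᵥ g) y =
        (∑ x, W y x * √(p x) * g x) / √((W *ᵥ p) y) := by
      simp only [divergenceTransitionMatrix, mulVec, dotProduct, of_apply, sum_div]
      congr! 1 with x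
      ring
    rw [hB, div_pow, sq_sqrt hq]
    refine div_le_of_le_mul₀ hq (sum_nonneg fun x _ => mul_nonneg (hW₀ y x) (sq_nonneg _)) ?_
    calc (∑ x, W y x * √(p x) * g x) ^ 2
        ≤ (∑ x, W y x * p x) * ∑ x, W y x * g x ^ 2 :=
          sum_sq_le_sum_mul_sum_of_sq_le_mul _ (fun x _ => mul_nonneg (hW₀ y x) (hp x))
            (fun x _ => mul_nonneg (hW₀ y x) (sq_nonneg _)) fun x _ => by
              rw [mul_pow, mul_pow, sq_sqrt (hp x)]
              exact le_of_eq (by ring)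
      _ = (∑ x, W y x * g x ^ 2) * (W *ᵥ p) y := mul_comm _ _
  calc ∑ y, (divergenceTransitionMatrix W p *ᵥ g) y ^ 2
      ≤ ∑ y, ∑ x, W y x * g x ^ 2 := sum_le_sum fun y _ => hrow y
    _ = ∑ x, g x ^ 2 := by simp only [sum_comm (γ := Y), ← sum_mul, hW₁, one_mul]

theorem isTopSingularPair_divergenceTransitionMatrix (hW₀ : ∀ y x, 0 ≤ W y x)
    (hW₁ : ∀ x, ∑ y, W y x = 1) (hp : ∀ x, 0 ≤ p x) (hq : ∀ y, 0 < (W *ᵥ p) y) :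
    IsTopSingularPair (divergenceTransitionMatrix W p) (fun x => √(p x))
      (fun y => √((W *ᵥ p) y)) where
  mulVec_eq := by
    ext y
    have e : ∀ x, W y x * √(p x) / √((W *ᵥ p) y) * √(p x) = W y x * p x / √((W *ᵥ p) y) :=
      fun x => by rw [div_mul_eq_mul_div, mul_assoc, mul_self_sqrt (hp x)]
    change ∑ x, W y x * √(p x) / √((W *ᵥ p) y) * √(p x) = _
    simp only [e, ← sum_div]
    exact div_sqrt
  vecMul_eq := by
    ext x
    have e : ∀ y, √((W *ᵥ p) y) * (W y x * √(p x) / √((W *ᵥ p) y)) = W y x * √(p x) :=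
      fun y => mul_div_cancel₀ _ (sqrt_ne_zero'.2 (hq y))
    simp only [divergenceTransitionMatrix, vecMul, dotProduct, of_apply, e, ← sum_mul, hW₁,
      one_mul]
  sum_sq_mulVec_le := sum_sq_divergenceTransitionMatrix_mulVec_le hW₀ hW₁ hp

end DivergenceTransitionMatrix

end

/-- Single-letter optimality for the 2-receiver common-message linear information
coupling problem: the 2-letter value
`sup { min(‖B₁⊗²L‖², ‖B₂⊗²L‖²) : ‖L‖ = 1, L ⊥ v₀ ⊗ v₀ }`
equals the single-letter value
`sup { min(‖B₁ℓ‖², ‖B₂ℓ‖²) : ‖ℓ‖ = 1, ℓ ⊥ v₀ }`, where `v₀ = √p`. -/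
theorem stmt_18 {X Y1 Y2 : Type*} [Fintype X] [Fintype Y1] [Fintype Y2]
    (W1 : Matrix Y1 X ℝ) (W2 : Matrix Y2 X ℝ) (p : X → ℝ) (q1 : Y1 → ℝ) (q2 : Y2 → ℝ)
    (hW10 : ∀ y x, 0 ≤ W1 y x) (hW11 : ∀ x, ∑ y, W1 y x = 1)
    (hW20 : ∀ y x, 0 ≤ W2 y x) (hW21 : ∀ x, ∑ y, W2 y x = 1)
    (hp : ∀ x, 0 < p x) (hpsum : ∑ x, p x = 1)
    (hq1 : q1 = W1.mulVec p) (hq1pos : ∀ y, 0 < q1 y)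
    (hq2 : q2 = W2.mulVec p) (hq2pos : ∀ y, 0 < q2 y)
    (B1 : Matrix Y1 X ℝ) (B2 : Matrix Y2 X ℝ)
    (hB1 : B1 = fun y x => W1 y x * Real.sqrt (p x) / Real.sqrt (q1 y))
    (hB2 : B2 = fun y x => W2 y x * Real.sqrt (p x) / Real.sqrt (q2 y))
    (B1t : Matrix (Y1 × Y1) (X × X) ℝ) (B2t : Matrix (Y2 × Y2) (X × X) ℝ)
    (hB1t : B1t = fun r s => B1 r.1 s.1 * B1 r.2 s.2)
    (hB2t : B2t = fun r s => B2 r.1 s.1 * B2 r.2 s.2) :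
    sSup {r : ℝ | ∃ L : X × X → ℝ, (∑ s, (L s) ^ 2 = 1) ∧
        (∑ s : X × X, L s * (Real.sqrt (p s.1) * Real.sqrt (p s.2))) = 0 ∧
        r = min (∑ t, (B1t.mulVec L t) ^ 2) (∑ t, (B2t.mulVec L t) ^ 2)} =
    sSup {r : ℝ | ∃ l : X → ℝ, (∑ x, (l x) ^ 2 = 1) ∧
        (∑ x, l x * Real.sqrt (p x)) = 0 ∧
        r = min (∑ y, (B1.mulVec l y) ^ 2) (∑ y, (B2.mulVec l y) ^ 2)} := by
  have hB1' : B1 = divergenceTransitionMatrix W1 p := by rw [hB1, hq1]; rfl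
  have hB2' : B2 = divergenceTransitionMatrix W2 p := by rw [hB2, hq2]; rfl
  have hB1t' : B1t = B1 ⊗ₖ B1 := hB1t
  have hB2t' : B2t = B2 ⊗ₖ B2 := hB2t
  subst hB1t' hB2t' hB1' hB2' hq1 hq2
  have hv : ∑ x, √(p x) ^ 2 = 1 := by simpa only [sq_sqrt (hp _).le] using hpsum
  have h1 := isTopSingularPair_divergenceTransitionMatrix hW10 hW11 (fun x => (hp x).le) hq1pos
  have h2 := isTopSingularPair_divergenceTransitionMatrix hW20 hW21 (fun x => (hp x).le) hq2pos
  exact linearCouplingValue_kronecker_self hv h1 h2
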